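/- arXiv:1002.2461 — 2 statements merged into one kernel-verified Lean document; each statement's English description precedes it below -/
import Mathlib

section
/- Let r, s, m be natural numbers and l a positive integer. In the polynomial ring R = ℂ[x_1,…,x_r, y_1,…,y_s], let I be the ideal generated by all the variables x_1,…,x_r,y_1,…,y_s and let J be the ideal generated by all products x_i·y_j (1 ≤ i ≤ r, 1 ≤ j ≤ s). If f is weighted homogeneous of weighted degree 0 for the ℤ-weighting in which each x_i has weight l and each y_j has weight −l, then f ∈ I^{2m} if and only if f ∈ J^{m}. -/
/-!
Weight `0` forces every monomial `x^a y^b` of `f` to have `|a| = |b|`. Membership in `I^(2m)`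
means `|a| + |b| ≥ 2m` for all of them, so `|a|, |b| ≥ m` and `x^a y^b ∈ (x)^m (y)^m = J^m`.
-/

open MvPolynomial

lemma Ideal.prod_pow_mem_pow_sum {R ι : Type*} [CommSemiring R] {I : Ideal R} {t : Finset ι}
    {x : ι → R} (hx : ∀ i ∈ t, x i ∈ I) (e : ι → ℕ) :
    ∏ i ∈ t, x i ^ e i ∈ I ^ ∑ i ∈ t, e i := by
  rw [← Finset.prod_pow_eq_pow_sum]
  exact Ideal.prod_mem_prod fun i hi => Ideal.pow_mem_pow (hx i hi) _

lemma Finsupp.degree_sum_type {σ τ : Type*} [Fintype σ] [Fintype τ] (d : σ ⊕ τ →₀ ℕ) :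
    d.degree = ∑ i, d (Sum.inl i) + ∑ j, d (Sum.inr j) := by
  rw [Finsupp.degree_eq_sum, Fintype.sum_sum_type]

namespace MvPolynomial

variable {σ τ R : Type*} [CommSemiring R]

lemma span_X_inl_mul_X_inr_eq_mul :
    Ideal.span {p : MvPolynomial (σ ⊕ τ) R | ∃ i j, p = X (Sum.inl i) * X (Sum.inr j)} =
      Ideal.span (Set.range (X ∘ Sum.inl)) * Ideal.span (Set.range (X ∘ Sum.inr)) := by
  rw [Ideal.span_mul_span']
  congr 1
  ext p
  simp [Set.mem_mul, eq_comm]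

variable [Fintype σ] [Fintype τ]

lemma monomial_mem_pow_span_X_inl_mul_pow_span_X_inr {m : ℕ} {d : σ ⊕ τ →₀ ℕ}
    (hx : m ≤ ∑ i, d (Sum.inl i)) (hy : m ≤ ∑ j, d (Sum.inr j)) (c : R) :
    monomial d c ∈ Ideal.span (Set.range (X ∘ Sum.inl)) ^ m *
      Ideal.span (Set.range (X ∘ Sum.inr)) ^ m := by
  have hprod : monomial d c = C c * ((∏ i, X (Sum.inl i) ^ d (Sum.inl i)) *
      ∏ j, X (Sum.inr j) ^ d (Sum.inr j)) := by
    rw [monomial_eq, Finsupp.prod_fintype _ _ fun _ => pow_zero _, Fintype.prod_sum_type]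
  rw [hprod]
  refine Ideal.mul_mem_left _ _ (Ideal.mul_mem_mul ?_ ?_)
  · exact Ideal.pow_le_pow_right hx
      (Ideal.prod_pow_mem_pow_sum (x := fun i => X (Sum.inl i))
        (fun i _ => Ideal.subset_span (Set.mem_range_self i)) _)
  · exact Ideal.pow_le_pow_right hy
      (Ideal.prod_pow_mem_pow_sum (x := fun j => X (Sum.inr j))
        (fun j _ => Ideal.subset_span (Set.mem_range_self j)) _)

lemma weight_eq_mul_sum_inl_sub_sum_inr {l : ℤ} {w : σ ⊕ τ → ℤ} (hwx : ∀ i, w (Sum.inl i) = l)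
    (hwy : ∀ j, w (Sum.inr j) = -l) (d : σ ⊕ τ →₀ ℕ) :
    Finsupp.weight w d = l * ((∑ i, d (Sum.inl i) : ℕ) - (∑ j, d (Sum.inr j) : ℕ)) := by
  rw [Finsupp.weight_apply, Finsupp.sum_fintype _ _ fun a => zero_smul ℕ (w a),
    Fintype.sum_sum_type]
  simp only [hwx, hwy, nsmul_eq_mul, Nat.cast_sum]
  rw [mul_sub, Finset.mul_sum, Finset.mul_sum, sub_eq_add_neg, ← Finset.sum_neg_distrib]
  congr 1 <;> exact Finset.sum_congr rfl fun _ _ => by ring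

lemma IsWeightedHomogeneous.sum_inl_eq_sum_inr {l : ℤ} (hl : l ≠ 0) {w : σ ⊕ τ → ℤ}
    (hwx : ∀ i, w (Sum.inl i) = l) (hwy : ∀ j, w (Sum.inr j) = -l)
    {f : MvPolynomial (σ ⊕ τ) R} (hf : f.IsWeightedHomogeneous w 0) {d : σ ⊕ τ →₀ ℕ}
    (hd : d ∈ f.support) : ∑ i, d (Sum.inl i) = ∑ j, d (Sum.inr j) := by
  have hw := hf (mem_support_iff.1 hd)
  rw [weight_eq_mul_sum_inl_sub_sum_inr hwx hwy] at hw
  have := (mul_eq_zero.1 hw).resolve_left hl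
  omega

end MvPolynomial

/-- In `R = ℂ[x_1,…,x_r, y_1,…,y_s]`, let `I` be the ideal generated by all the
variables and `J` the ideal generated by all products `x_i * y_j`. If `f` is
weighted homogeneous of weighted degree `0` for the weighting `w(x_i) = l`,
`w(y_j) = -l` (with `l > 0`), then `f ∈ I^(2m) ↔ f ∈ J^m`. -/
theorem stmt_5 (r s m : ℕ) (l : ℤ) (hl : 0 < l)
    (w : Fin r ⊕ Fin s → ℤ)
    (hwx : ∀ i : Fin r, w (Sum.inl i) = l)
    (hwy : ∀ j : Fin s, w (Sum.inr j) = -l)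
    (I J : Ideal (MvPolynomial (Fin r ⊕ Fin s) ℂ))
    (hI : I = Ideal.span (Set.range X))
    (hJ : J = Ideal.span
      {p : MvPolynomial (Fin r ⊕ Fin s) ℂ |
        ∃ (i : Fin r) (j : Fin s), p = X (Sum.inl i) * X (Sum.inr j)})
    (f : MvPolynomial (Fin r ⊕ Fin s) ℂ)
    (hf : f.IsWeightedHomogeneous w 0) :
    f ∈ I ^ (2 * m) ↔ f ∈ J ^ m := by
  subst hI hJ
  rw [span_X_inl_mul_X_inr_eq_mul, mul_pow]
  constructor
  · intro hfI
    rw [f.as_sum]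
    refine Ideal.sum_mem _ fun d hd => ?_
    have hdeg := (mem_pow_idealOfVars_iff _ f).1 hfI d hd
    have hbal := hf.sum_inl_eq_sum_inr hl.ne' hwx hwy hd
    rw [Finsupp.degree_sum_type] at hdeg
    exact monomial_mem_pow_span_X_inl_mul_pow_span_X_inr (by omega) (by omega) _
  · intro hfJ
    rw [pow_mul, sq, mul_pow]
    exact Ideal.mul_mono
      (Ideal.pow_right_mono (Ideal.span_mono (Set.range_comp_subset_range _ _)) m)
      (Ideal.pow_right_mono (Ideal.span_mono (Set.range_comp_subset_range _ _)) m) hfJ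
end

section
/- Let r, s be natural numbers, l a positive integer, and m ≥ 1 a natural number. In the polynomial ring R = ℂ[x_1,…,x_r, y_1,…,y_s], let I be the ideal generated by all the variables and let J be the ideal generated by all products x_i·y_j (1 ≤ i ≤ r, 1 ≤ j ≤ s). If f is weighted homogeneous of weighted degree 0 for the ℤ-weighting in which each x_i has weight l and each y_j has weight −l, and f^m ∈ I, then f ∈ J. -/
open MvPolynomial

/-- In `R = ℂ[x_1,…,x_r, y_1,…,y_s]`, let `I` be the ideal generated by all the
variables and `J` the ideal generated by all products `x_i * y_j`. If `f` is
weighted homogeneous of weighted degree `0` for the weighting `w(x_i) = l`,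
`w(y_j) = -l` (with `l > 0`, `m ≥ 1`) and `f^m ∈ I`, then `f ∈ J`. -/
theorem stmt_6 (r s : ℕ) (l : ℤ) (hl : 0 < l) (m : ℕ) (hm : 1 ≤ m)
    (w : Fin r ⊕ Fin s → ℤ)
    (hwx : ∀ i : Fin r, w (Sum.inl i) = l)
    (hwy : ∀ j : Fin s, w (Sum.inr j) = -l)
    (I J : Ideal (MvPolynomial (Fin r ⊕ Fin s) ℂ))
    (hI : I = Ideal.span (Set.range X))
    (hJ : J = Ideal.span
      {p : MvPolynomial (Fin r ⊕ Fin s) ℂ |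
        ∃ (i : Fin r) (j : Fin s), p = X (Sum.inl i) * X (Sum.inr j)})
    (f : MvPolynomial (Fin r ⊕ Fin s) ℂ)
    (hf : f.IsWeightedHomogeneous w 0)
    (hfm : f ^ m ∈ I) :
    f ∈ J := by
  -- Step 1: constant coefficient of f is 0
  have hc0 : constantCoeff f = 0 := by
    have hker : I ≤ RingHom.ker (constantCoeff (σ := Fin r ⊕ Fin s) (R := ℂ)) := by
      rw [hI, Ideal.span_le]
      rintro _ ⟨i, rfl⟩
      simp [RingHom.mem_ker]
    have h1 : constantCoeff (f ^ m) = 0 := hker hfm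
    rw [map_pow] at h1
    exact pow_eq_zero_iff (Nat.one_le_iff_ne_zero.mp hm) |>.mp h1
  -- Step 2: each monomial of f lies in J
  rw [← support_sum_monomial_coeff f]
  apply Ideal.sum_mem
  intro d hd
  have hcd : coeff d f ≠ 0 := mem_support_iff.mp hd
  have hdne : d ≠ 0 := fun h => hcd (h ▸ hc0)
  have hne : d.support.Nonempty := Finsupp.support_nonempty_iff.mpr hdne
  have hwd : (Finsupp.weight w) d = 0 := hf hcd
  rw [Finsupp.weight_apply, Finsupp.sum] at hwd
  -- some x-variable occurs in d
  have hx : ∃ i : Fin r, d (Sum.inl i) ≠ 0 := by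
    by_contra h
    push_neg at h
    have hlt : ∑ v ∈ d.support, d v • w v < ∑ _v ∈ d.support, (0 : ℤ) := by
      apply Finset.sum_lt_sum_of_nonempty hne
      rintro (i | j) hv
      · exact absurd (h i) (Finsupp.mem_support_iff.mp hv)
      · have h1 : (1 : ℤ) ≤ (d (Sum.inr j) : ℤ) := by
          exact_mod_cast Nat.one_le_iff_ne_zero.mpr (Finsupp.mem_support_iff.mp hv)
        rw [hwy j, nsmul_eq_mul]
        nlinarith
    simp only [Finset.sum_const_zero] at hlt
    omega
  -- some y-variable occurs in d
  have hy : ∃ j : Fin s, d (Sum.inr j) ≠ 0 := by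
    by_contra h
    push_neg at h
    have hlt : ∑ _v ∈ d.support, (0 : ℤ) < ∑ v ∈ d.support, d v • w v := by
      apply Finset.sum_lt_sum_of_nonempty hne
      rintro (i | j) hv
      · have h1 : (1 : ℤ) ≤ (d (Sum.inl i) : ℤ) := by
          exact_mod_cast Nat.one_le_iff_ne_zero.mpr (Finsupp.mem_support_iff.mp hv)
        rw [hwx i, nsmul_eq_mul]
        nlinarith
      · exact absurd (h j) (Finsupp.mem_support_iff.mp hv)
    simp only [Finset.sum_const_zero] at hlt
    omega
  obtain ⟨i, hi⟩ := hx
  obtain ⟨j, hj⟩ := hy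
  -- the generator x_i y_j divides the monomial
  have hgen : X (Sum.inl i) * X (Sum.inr j) ∈ J := by
    rw [hJ]
    exact Ideal.subset_span ⟨i, j, rfl⟩
  have hdvd : (X (Sum.inl i) * X (Sum.inr j) : MvPolynomial (Fin r ⊕ Fin s) ℂ) ∣
      monomial d (coeff d f) := by
    rw [X, X, monomial_mul, one_mul]
    rw [monomial_dvd_monomial]
    refine ⟨Or.inr ?_, one_dvd _⟩
    intro v
    have h1 : 1 ≤ d (Sum.inl i) := Nat.one_le_iff_ne_zero.mpr hi
    have h2 : 1 ≤ d (Sum.inr j) := Nat.one_le_iff_ne_zero.mpr hj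
    rcases v with a | b <;> simp [Finsupp.single_apply] <;> split_ifs <;> simp_all
  obtain ⟨q, hq⟩ := hdvd
  rw [hq]
  exact Ideal.mul_mem_right _ _ hgen
end
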